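/- arXiv:1606.00760 — 3 statements merged into one kernel-verified Lean document; each statement's English description precedes it below -/
import Mathlib

section
/- The binomials 1 − X^a Y^b, for integers a ≥ 0 and b ≥ 1, freely generate a free abelian subgroup of the multiplicative group of the rational function field Q(X,Y): any finite product ∏ (1 − X^{a_i} Y^{b_i})^{e_i} with distinct pairs (a_i,b_i) and nonzero integer exponents e_i is not equal to 1. -/
/-!
Substituting `X ↦ T ^ N`, `Y ↦ T` with `N` larger than every `bᵢ` sends `1 - X ^ a * Y ^ b` to
`1 - T ^ (N * a + b)`, and distinct pairs to distinct positive exponents `nᵢ`. After clearing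
denominators a relation becomes `∏ (1 - T ^ nᵢ) ^ eᵢ⁺ = ∏ (1 - T ^ nᵢ) ^ eᵢ⁻` in `ℂ[T]`. A primitive
root of unity of order `max nᵢ` is a simple root of the factor with the largest `nᵢ` and of no other
factor, so its multiplicity forces `eᵢ⁺ = eᵢ⁻` there, i.e. `eᵢ = 0`.
-/

open Polynomial Finset

section ClearDenominators

variable {R K ι : Type*} [CommRing R] [Field K]

theorem prod_pow_toNat_eq_of_prod_zpow_eq_one {φ : R →+* K} (hφ : Function.Injective φ)
    {s : Finset ι} {f : ι → R} (hf : ∀ i ∈ s, f i ≠ 0) {e : ι → ℤ}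
    (h : ∏ i ∈ s, φ (f i) ^ e i = 1) :
    ∏ i ∈ s, f i ^ (e i).toNat = ∏ i ∈ s, f i ^ (-e i).toNat := by
  have hφf : ∀ i ∈ s, φ (f i) ≠ 0 := fun i hi => (map_ne_zero_iff φ hφ).mpr (hf i hi)
  have hsplit : ∏ i ∈ s, φ (f i) ^ e i
      = (∏ i ∈ s, φ (f i) ^ (e i).toNat) / ∏ i ∈ s, φ (f i) ^ (-e i).toNat := by
    rw [← prod_div_distrib]
    refine prod_congr rfl fun i hi => ?_
    rw [← zpow_natCast, ← zpow_natCast, ← zpow_sub₀ (hφf i hi), Int.toNat_sub_toNat_neg]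
  have hden : ∏ i ∈ s, φ (f i) ^ (-e i).toNat ≠ 0 :=
    prod_ne_zero_iff.mpr fun i hi => pow_ne_zero _ (hφf i hi)
  apply hφ
  simpa only [map_prod, map_pow, hsplit, div_eq_one_iff_eq hden] using h

end ClearDenominators

namespace Polynomial

variable {R ι : Type*} [CommRing R] [IsDomain R]

theorem one_sub_X_pow_ne_zero {n : ℕ} (hn : 0 < n) : (1 - X ^ n : R[X]) ≠ 0 := by
  rw [← neg_sub, neg_ne_zero, ← C_1]
  exact X_pow_sub_C_ne_zero hn 1

theorem count_roots_prod_pow [DecidableEq R] {s : Finset ι} {g : ι → R[X]} {k : ι → ℕ}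
    (h : ∏ i ∈ s, g i ^ k i ≠ 0) (a : R) :
    (∏ i ∈ s, g i ^ k i).roots.count a = ∑ i ∈ s, k i * (g i).roots.count a := by
  simp only [roots_prod _ _ h, Multiset.count_bind, roots_pow, Multiset.count_nsmul]
  rfl

theorem count_roots_one_sub_X_pow [DecidableEq R] {ζ : R} {m n : ℕ} (hζ : IsPrimitiveRoot ζ m)
    (hn : 0 < n) (hnm : n ≤ m) : (1 - X ^ n : R[X]).roots.count ζ = if n = m then 1 else 0 := by
  rw [← neg_sub, roots_neg, ← C_1, ← nthRoots]
  split_ifs with h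
  · subst h
    exact Multiset.count_eq_one_of_mem hζ.nthRoots_one_nodup ((mem_nthRoots hn).mpr hζ.pow_eq_one)
  · refine Multiset.count_eq_zero.mpr fun hmem => h ?_
    have := Nat.le_of_dvd hn (hζ.dvd_of_pow_eq_one n ((mem_nthRoots hn).mp hmem))
    omega

theorem exponent_eq_of_prod_one_sub_X_pow_pow_eq {s : Finset ι} {n : ι → ℕ}
    (hn : ∀ i ∈ s, 0 < n i) (hinj : Set.InjOn n s) {k l : ι → ℕ}
    (h : ∏ i ∈ s, (1 - X ^ n i : R[X]) ^ k i = ∏ i ∈ s, (1 - X ^ n i : R[X]) ^ l i)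
    {i₀ : ι} (hi₀ : i₀ ∈ s) (hmax : ∀ i ∈ s, n i ≤ n i₀) {ζ : R}
    (hζ : IsPrimitiveRoot ζ (n i₀)) : k i₀ = l i₀ := by
  classical
  have hne : ∀ k : ι → ℕ, ∏ i ∈ s, (1 - X ^ n i : R[X]) ^ k i ≠ 0 := fun k =>
    prod_ne_zero_iff.mpr fun i hi => pow_ne_zero _ (one_sub_X_pow_ne_zero (hn i hi))
  have hcount : ∀ k : ι → ℕ, (∏ i ∈ s, (1 - X ^ n i : R[X]) ^ k i).roots.count ζ = k i₀ := by
    intro k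
    rw [count_roots_prod_pow (hne k), sum_eq_single_of_mem i₀ hi₀ fun i hi hii₀ => ?_,
      count_roots_one_sub_X_pow hζ (hn i₀ hi₀) le_rfl, if_pos rfl, mul_one]
    rw [count_roots_one_sub_X_pow hζ (hn i hi) (hmax i hi),
      if_neg fun heq => hii₀ (hinj hi hi₀ heq), mul_zero]
  rw [← hcount k, ← hcount l, h]

end Polynomial

theorem MvPolynomial.aeval_one_sub_X_pow_mul_X_pow {R S : Type*} [CommRing R] [CommRing S]
    [Algebra R S] (N a b : ℕ) :
    aeval ![(Polynomial.X : S[X]) ^ N, Polynomial.X]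
        (1 - X 0 ^ a * X 1 ^ b : MvPolynomial (Fin 2) R)
      = 1 - Polynomial.X ^ (N * a + b) := by
  simp only [map_sub, map_one, map_mul, map_pow, aeval_X, Matrix.cons_val_zero, Matrix.cons_val_one,
    pow_add, pow_mul]

theorem Nat.injOn_mul_add (N : ℕ) : Set.InjOn (fun p : ℕ × ℕ => N * p.1 + p.2) {p | p.2 < N} := by
  intro p hp q hq h
  have hN : 0 < N := lt_of_le_of_lt (Nat.zero_le _) hp
  have hdiv : ∀ r : ℕ × ℕ, r.2 < N → (N * r.1 + r.2) / N = r.1 ∧ (N * r.1 + r.2) % N = r.2 :=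
    fun r hr => (Nat.div_mod_unique hN).mpr ⟨add_comm _ _, hr⟩
  obtain ⟨hp1, hp2⟩ := hdiv p hp
  obtain ⟨hq1, hq2⟩ := hdiv q hq
  simp only at h
  exact Prod.ext (hp1.symm.trans (h ▸ hq1)) (hp2.symm.trans (h ▸ hq2))

/-- The binomials `1 − X^a Y^b` (for `a ≥ 0`, `b ≥ 1`) freely generate a free abelian
subgroup of `ℚ(X,Y)^×`: any finite product `∏ (1 − X^{aᵢ} Y^{bᵢ})^{eᵢ}` over distinct
pairs `(aᵢ, bᵢ)` with nonzero integer exponents `eᵢ` is not equal to `1`. -/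
theorem binomials_multiplicatively_independent
    (s : Finset (ℕ × ℕ)) (e : ℕ × ℕ → ℤ)
    (hb : ∀ p ∈ s, 1 ≤ p.2) (he : ∀ p ∈ s, e p ≠ 0) (hne : s.Nonempty) :
    ∏ p ∈ s,
        ((1 : FractionRing (MvPolynomial (Fin 2) ℚ))
          - (algebraMap (MvPolynomial (Fin 2) ℚ) _ (MvPolynomial.X 0)) ^ p.1
            * (algebraMap (MvPolynomial (Fin 2) ℚ) _ (MvPolynomial.X 1)) ^ p.2) ^ (e p)
      ≠ 1 := by
  intro h
  set N := s.sup Prod.snd + 1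
  set n : ℕ × ℕ → ℕ := fun p => N * p.1 + p.2
  set ψ : MvPolynomial (Fin 2) ℚ →ₐ[ℚ] ℂ[X] := MvPolynomial.aeval ![X ^ N, X]
  have hψ : ∀ p : ℕ × ℕ, ψ (1 - MvPolynomial.X 0 ^ p.1 * MvPolynomial.X 1 ^ p.2) = 1 - X ^ n p :=
    fun p => MvPolynomial.aeval_one_sub_X_pow_mul_X_pow N p.1 p.2
  have hn : ∀ p ∈ s, 0 < n p := fun p hp => Nat.lt_add_left _ (hb p hp)
  have hinj : Set.InjOn n s :=
    (Nat.injOn_mul_add N).mono fun p hp => Nat.lt_succ_of_le (le_sup (f := Prod.snd) hp)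
  have hf : ∀ p ∈ s,
      (1 - MvPolynomial.X 0 ^ p.1 * MvPolynomial.X 1 ^ p.2 : MvPolynomial (Fin 2) ℚ) ≠ 0 :=
    fun p hp hzero => one_sub_X_pow_ne_zero (R := ℂ) (hn p hp) (by rw [← hψ, hzero, map_zero])
  have hcleared := prod_pow_toNat_eq_of_prod_zpow_eq_one
    (IsFractionRing.injective (MvPolynomial (Fin 2) ℚ) (FractionRing (MvPolynomial (Fin 2) ℚ)))
    hf (by simpa only [map_sub, map_one, map_mul, map_pow] using h)
  replace hcleared := congrArg ψ hcleared
  simp only [map_prod, map_pow, hψ] at hcleared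
  obtain ⟨p₀, hp₀, hmax⟩ := s.exists_max_image n hne
  have hexp := exponent_eq_of_prod_one_sub_X_pow_pow_eq hn hinj hcleared hp₀ hmax
    (Complex.isPrimitiveRoot_exp _ (hn p₀ hp₀).ne')
  exact he p₀ hp₀ (by omega)
end

section
/- For two partitions λ, μ of positive integers: if W_λ(X,Y) = W_μ(X,Y) as rational functions, then λ = μ, where W_λ(X,Y) = 1/∏_{j=1}^{|λ|} (1 − X^{j−1} Y^{ind_λ(j)}). -/
/-!
Substituting `Y ↦ X ^ N` with `N > |λ| + |μ|` turns the denominator of `W_λ` into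
`∏ (1 - X ^ e)` over the exponents `e = (j - 1) + N * ind_λ(j)`; the exponents of row `i` lie
in `[i N, (i + 1) N)`, so this multiset determines `λ` row by row. A product
`∏_{e ∈ S} (1 - X ^ e)` with positive exponents determines `S`: for the least exponent `m`,
the coefficient of `X ^ m` is minus the multiplicity of `m` in `S`, so the common factor
`1 - X ^ m` can be cancelled.
-/

/-- For a partition `λ` (given as a non-increasing list of positive integers), the
rational function `W_λ(X,Y) = 1/∏_{j=1}^{|λ|} (1 − X^{j−1} Y^{ind_λ(j)})`, written in
the equivalent form `1/∏_{i=1}^{len λ}∏_{j=1}^{λᵢ} (1 − X^{σ_{i−1}(λ)+j−1} Y^i)`,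
as an element of `ℚ(X,Y)`. -/
noncomputable def Wfun (l : List ℕ) : FractionRing (MvPolynomial (Fin 2) ℚ) :=
  ∏ i : Fin l.length, ∏ j : Fin (l.get i),
    ((1 : FractionRing (MvPolynomial (Fin 2) ℚ))
      - (algebraMap (MvPolynomial (Fin 2) ℚ) _ (MvPolynomial.X 0)) ^ ((l.take i).sum + (j : ℕ))
        * (algebraMap (MvPolynomial (Fin 2) ℚ) _ (MvPolynomial.X 1)) ^ ((i : ℕ) + 1))⁻¹

open Polynomial

noncomputable def prodOneSubXPow {R : Type*} [CommRing R] (S : Multiset ℕ) : R[X] :=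
  (S.map fun e => 1 - X ^ e).prod

section prodOneSubXPow

variable {R : Type*} [CommRing R]

lemma prodOneSubXPow_cons (a : ℕ) (S : Multiset ℕ) :
    (prodOneSubXPow (a ::ₘ S) : R[X]) = (1 - X ^ a) * prodOneSubXPow S := by
  simp [prodOneSubXPow]

lemma coeff_zero_prodOneSubXPow {S : Multiset ℕ} (hS : ∀ e ∈ S, 0 < e) :
    (prodOneSubXPow S : R[X]).coeff 0 = 1 := by
  rw [coeff_zero_eq_eval_zero, prodOneSubXPow, eval_multiset_prod, Multiset.map_map]
  refine Multiset.prod_eq_one fun x hx => ?_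
  obtain ⟨e, he, rfl⟩ := Multiset.mem_map.mp hx
  simp [zero_pow (hS e he).ne']

lemma coeff_prodOneSubXPow_of_forall_le {m : ℕ} (hm : 0 < m) {S : Multiset ℕ}
    (hS : ∀ e ∈ S, m ≤ e) : (prodOneSubXPow S : R[X]).coeff m = -(S.count m : R) := by
  induction S using Multiset.induction_on with
  | empty => simp [prodOneSubXPow, coeff_one, hm.ne']
  | cons a S ih =>
    have hSm : ∀ e ∈ S, m ≤ e := fun e he => hS e (Multiset.mem_cons_of_mem he)
    rw [prodOneSubXPow_cons, sub_mul, one_mul, coeff_sub, coeff_X_pow_mul', ih hSm]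
    rcases (hS a (Multiset.mem_cons_self a S)).eq_or_lt with rfl | hlt
    · rw [if_pos le_rfl, Nat.sub_self,
        coeff_zero_prodOneSubXPow fun e he => hm.trans_le (hSm e he), Multiset.count_cons_self]
      push_cast
      ring
    · rw [if_neg (not_le.mpr hlt), Multiset.count_cons_of_ne hlt.ne, sub_zero]

lemma count_eq_of_prodOneSubXPow_eq [CharZero R] {m : ℕ} (hm : 0 < m) {S T : Multiset ℕ}
    (hS : ∀ e ∈ S, m ≤ e) (hT : ∀ e ∈ T, m ≤ e)
    (h : (prodOneSubXPow S : R[X]) = prodOneSubXPow T) : S.count m = T.count m := by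
  simpa [coeff_prodOneSubXPow_of_forall_le hm hS, coeff_prodOneSubXPow_of_forall_le hm hT]
    using congrArg (coeff · m) h

lemma prodOneSubXPow_injective [IsDomain R] [CharZero R] {S T : Multiset ℕ}
    (hS : ∀ e ∈ S, 0 < e) (hT : ∀ e ∈ T, 0 < e)
    (h : (prodOneSubXPow S : R[X]) = prodOneSubXPow T) : S = T := by
  induction hn : Multiset.card (S + T) using Nat.strong_induction_on generalizing S T with
  | _ n ih =>
  rcases Multiset.empty_or_exists_mem (S + T) with hST | hex
  · rw [add_eq_zero] at hST
    rw [hST.1, hST.2]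
  let m := Nat.find hex
  have hmin : ∀ e ∈ S + T, m ≤ e := fun e he => Nat.find_min' hex he
  have hmST : m ∈ S + T := Nat.find_spec hex
  have hm : 0 < m := by
    rcases Multiset.mem_add.mp hmST with h | h
    exacts [hS m h, hT m h]
  have hcount : S.count m = T.count m := count_eq_of_prodOneSubXPow_eq hm
    (fun e he => hmin e (Multiset.mem_add.mpr (.inl he)))
    (fun e he => hmin e (Multiset.mem_add.mpr (.inr he))) h
  have hmS : m ∈ S := by
    rcases Multiset.mem_add.mp hmST with h | h
    · exact h
    · rwa [← Multiset.count_pos, hcount, Multiset.count_pos]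
  have hmT : m ∈ T := by rwa [← Multiset.count_pos, ← hcount, Multiset.count_pos]
  rw [← Multiset.cons_erase hmS, ← Multiset.cons_erase hmT] at h ⊢
  have hfactor : (1 - X ^ m : R[X]) ≠ 0 := by
    intro h0
    simpa [hm.ne] using congrArg (coeff · 0) h0
  rw [prodOneSubXPow_cons, prodOneSubXPow_cons] at h
  rw [ih _ ?_ (fun e he => hS e (Multiset.mem_of_mem_erase he))
    (fun e he => hT e (Multiset.mem_of_mem_erase he)) (mul_left_cancel₀ hfactor h) rfl]
  rw [← hn, Multiset.card_add, Multiset.card_add]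
  have := Multiset.card_erase_lt_of_mem hmS
  have := Multiset.card_erase_le (a := m) (s := T)
  omega

end prodOneSubXPow

theorem Multiset.eq_and_eq_of_add_eq_add_of_separated {α : Type*} {p : α → Prop}
    [DecidablePred p] {A B A' B' : Multiset α} (hA : ∀ x ∈ A, p x) (hA' : ∀ x ∈ A', p x)
    (hB : ∀ x ∈ B, ¬p x) (hB' : ∀ x ∈ B', ¬p x) (h : A + B = A' + B') :
    A = A' ∧ B = B' := by
  have hAA' : A = A' := by
    simpa [Multiset.filter_add, Multiset.filter_eq_self.mpr hA, Multiset.filter_eq_self.mpr hA',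
      Multiset.filter_eq_nil.mpr hB, Multiset.filter_eq_nil.mpr hB'] using congrArg (filter p) h
  subst hAA'
  exact ⟨rfl, add_left_cancel h⟩

/-- `prodCells f λ = ∏_{k=1}^{|λ|} f (k - 1) (ind_λ k)`, computed row by row: the `j`-th cell
of row `i` (both from `0`) is the cell `k = σ_i(λ) + j + 1`. -/
def prodCells {M : Type*} [CommMonoid M] (f : ℕ → ℕ → M) (l : List ℕ) : M :=
  ∏ i : Fin l.length, ∏ j : Fin (l.get i), f ((l.take i).sum + j) (i + 1)

lemma prodCells_cons {M : Type*} [CommMonoid M] (f : ℕ → ℕ → M) (a : ℕ) (l : List ℕ) :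
    prodCells f (a :: l) = (∏ j : Fin a, f j 1) * prodCells (fun k i => f (a + k) (i + 1)) l := by
  simp only [prodCells, List.length_cons, Fin.prod_univ_succ, Fin.val_zero, List.take_zero,
    List.sum_nil, zero_add, Fin.val_succ, List.take_succ_cons, List.sum_cons, add_assoc]
  rfl

/-- The exponents `k + N * i` of the cells `(k, i)` of `l`: substituting `Y ↦ X ^ N` turns
`1 - X ^ k * Y ^ i` into `1 - X ^ (k + N * i)`. -/
def cellExponents (N : ℕ) : List ℕ → Multiset ℕ
  | [] => 0
  | a :: l => (Multiset.range a).map (· + N) + (cellExponents N l).map (· + (a + N))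

lemma prod_map_cellExponents {M : Type*} [CommMonoid M] (N : ℕ) (l : List ℕ) (g : ℕ → M) :
    ((cellExponents N l).map g).prod = prodCells (fun k i => g (k + N * i)) l := by
  induction l generalizing g with
  | nil => simp [cellExponents, prodCells]
  | cons a l ih =>
    rw [prodCells_cons, cellExponents, Multiset.map_add, Multiset.prod_add, Multiset.map_map,
      Multiset.map_map, ih, Fin.prod_univ_eq_prod_range (fun j => g (j + N * 1)),
      ← Finset.prod_map_val, Finset.range_val]
    congr 1
    · simp
    · congr 1
      funext k i
      simp only [Function.comp_apply]
      congr 1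
      ring

lemma le_of_mem_cellExponents {N e : ℕ} {l : List ℕ} (he : e ∈ cellExponents N l) :
    N ≤ e := by
  induction l generalizing e with
  | nil => simp [cellExponents] at he
  | cons a l ih =>
    rcases Multiset.mem_add.mp he with he | he <;>
    · obtain ⟨e', he', rfl⟩ := Multiset.mem_map.mp he
      omega

lemma cellExponents_cons_ne_zero (N : ℕ) {a : ℕ} (ha : 0 < a) (l : List ℕ) :
    cellExponents N (a :: l) ≠ 0 := fun h => Multiset.notMem_zero N <| h ▸
  Multiset.mem_add.mpr (.inl (Multiset.mem_map.mpr ⟨0, Multiset.mem_range.mpr ha, zero_add N⟩))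

lemma cellExponents_injective {N : ℕ} {l₁ l₂ : List ℕ} (h₁p : ∀ a ∈ l₁, 0 < a)
    (h₂p : ∀ a ∈ l₂, 0 < a) (h₁N : l₁.sum ≤ N) (h₂N : l₂.sum ≤ N)
    (h : cellExponents N l₁ = cellExponents N l₂) : l₁ = l₂ := by
  induction l₁ generalizing l₂ with
  | nil =>
    cases l₂ with
    | nil => rfl
    | cons b t => exact absurd h.symm (cellExponents_cons_ne_zero N (h₂p b (by simp)) t)
  | cons a s ih =>
    cases l₂ with
    | nil => exact absurd h (cellExponents_cons_ne_zero N (h₁p a (by simp)) s)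
    | cons b t =>
      simp only [List.sum_cons, List.mem_cons, forall_eq_or_imp] at h₁N h₂N h₁p h₂p
      have hrow_lt (c : ℕ) (hc : c ≤ N) :
          ∀ x ∈ (Multiset.range c).map (· + N), x < 2 * N := by
        intro x hx
        obtain ⟨j, hj, rfl⟩ := Multiset.mem_map.mp hx
        have := Multiset.mem_range.mp hj
        omega
      have hrest_ge (c : ℕ) (l : List ℕ) :
          ∀ x ∈ (cellExponents N l).map (· + (c + N)), ¬x < 2 * N := by
        intro x hx
        obtain ⟨e, he, rfl⟩ := Multiset.mem_map.mp hx
        have := le_of_mem_cellExponents he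
        omega
      obtain ⟨hrow, hrest⟩ := Multiset.eq_and_eq_of_add_eq_add_of_separated
        (hrow_lt a (by omega)) (hrow_lt b (by omega)) (hrest_ge a s) (hrest_ge b t) h
      have hab : a = b := by simpa using congrArg Multiset.card hrow
      subst hab
      rw [ih h₁p.2 h₂p.2 (by omega) (by omega)
        (Multiset.map_injective (add_left_injective _) hrest)]

noncomputable def cellBinomial (k i : ℕ) : MvPolynomial (Fin 2) ℚ :=
  1 - MvPolynomial.X 0 ^ k * MvPolynomial.X 1 ^ i

lemma Wfun_eq_inv (l : List ℕ) :
    Wfun l =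
      (algebraMap _ (FractionRing (MvPolynomial (Fin 2) ℚ)) (prodCells cellBinomial l))⁻¹ := by
  simp [Wfun, prodCells, cellBinomial, Finset.prod_inv_distrib]

lemma aeval_prodCells_cellBinomial (N : ℕ) (l : List ℕ) :
    MvPolynomial.aeval ![(X : ℚ[X]), X ^ N] (prodCells cellBinomial l) =
      (prodOneSubXPow (cellExponents N l) : ℚ[X]) := by
  rw [prodOneSubXPow, prod_map_cellExponents]
  simp [prodCells, cellBinomial, pow_add, pow_mul]

theorem Wfun_injective_on_partitions_general
    (l₁ l₂ : List ℕ)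
    (h₁p : ∀ a ∈ l₁, 0 < a)
    (h₂p : ∀ a ∈ l₂, 0 < a)
    (hW : Wfun l₁ = Wfun l₂) : l₁ = l₂ := by
  set N := l₁.sum + l₂.sum + 1
  have hcells : prodCells cellBinomial l₁ = prodCells cellBinomial l₂ := by
    rw [Wfun_eq_inv, Wfun_eq_inv, inv_inj] at hW
    exact IsFractionRing.injective _ _ hW
  have hprod := congrArg (MvPolynomial.aeval ![(X : ℚ[X]), X ^ N]) hcells
  rw [aeval_prodCells_cellBinomial, aeval_prodCells_cellBinomial] at hprod
  have hpos (l : List ℕ) : ∀ e ∈ cellExponents N l, 0 < e :=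
    fun _ he => Nat.succ_pos _ |>.trans_le (le_of_mem_cellExponents he)
  exact cellExponents_injective h₁p h₂p (by omega) (by omega)
    (prodOneSubXPow_injective (hpos l₁) (hpos l₂) hprod)

/-- For two partitions `λ, μ` of positive integers: if `W_λ(X,Y) = W_μ(X,Y)` as rational
functions, then `λ = μ`. -/
theorem Wfun_injective_on_partitions
    (l₁ l₂ : List ℕ)
    (h₁s : List.Pairwise (· ≥ ·) l₁) (h₁p : ∀ a ∈ l₁, 0 < a) (h₁n : 0 < l₁.sum)
    (h₂s : List.Pairwise (· ≥ ·) l₂) (h₂p : ∀ a ∈ l₂, 0 < a) (h₂n : 0 < l₂.sum)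
    (hW : Wfun l₁ = Wfun l₂) : l₁ = l₂ :=
  Wfun_injective_on_partitions_general l₁ l₂ h₁p h₂p hW
end

section
/- Let g be a finite-dimensional non-abelian Lie algebra of maximal class over a field k of characteristic 0, of dimension n + 2 with n ≥ 1. Then there exists a basis (x₁, x₂, y₁, …, y_n) of g such that [x₁, x₂] = y₁, [x₁, y_i] = y_{i+1} for 1 ≤ i ≤ n−1, and [x₁, y_n] = 0. -/
/-!
Choose `a ∈ g` outside the subspaces `{a | [a, gⁱ] ⊆ gⁱ⁺²}`, `1 ≤ i ≤ n`; each is proper because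
`gⁱ⁺¹ = [g, gⁱ] ≠ gⁱ⁺²`, so over an infinite field such an `a` exists. Take `x` with
`[a, x] ∉ g³` and put `yᵢ = (ad a)ⁱ x ∈ gⁱ⁺¹`. Since `gʲ/gʲ⁺¹` is one-dimensional for
`2 ≤ j ≤ n + 1`, `yᵢ` spans `gⁱ⁺¹/gⁱ⁺²` as soon as `yᵢ ∉ gⁱ⁺²`, and then `[a, gⁱ⁺¹] ⊄ gⁱ⁺³` forces
`yᵢ₊₁ ∉ gⁱ⁺³`. As `g/g²` is two-dimensional and `[a, x] ∉ g³`, the vectors `a, x, y₁, …, yₙ`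
span `g`, so they form a basis, and `[a, yₙ] = yₙ₊₁ ∈ gⁿ⁺² = 0`.
-/

open LieModule

section LowerCentralSeries

variable {R L M : Type*} [CommRing R] [LieRing L] [LieAlgebra R L]
  [AddCommGroup M] [Module R M] [LieRingModule L M]

lemma lowerCentralSeries_eq_of_succ_eq {i : ℕ}
    (h : lowerCentralSeries R L M (i + 1) = lowerCentralSeries R L M i) {j : ℕ} (hij : i ≤ j) :
    lowerCentralSeries R L M j = lowerCentralSeries R L M i := by
  induction j, hij using Nat.le_induction with
  | base => rfl
  | succ j _ ih => rw [lowerCentralSeries_succ, ih, ← lowerCentralSeries_succ, h]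

lemma lie_mem_lowerCentralSeries_succ (x : L) {m : M} {i : ℕ}
    (hm : m ∈ lowerCentralSeries R L M i) :
    ⁅x, m⁆ ∈ lowerCentralSeries R L M (i + 1) := by
  rw [lowerCentralSeries_succ]
  exact LieSubmodule.lie_mem_lie (LieSubmodule.mem_top x) hm

lemma lowerCentralSeries_succ_lt [LieModule R L M] {n i : ℕ}
    (hbot : lowerCentralSeries R L M (n + 1) = ⊥) (hne : lowerCentralSeries R L M n ≠ ⊥)
    (hi : i ≤ n) :
    lowerCentralSeries R L M (i + 1) < lowerCentralSeries R L M i := by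
  refine (antitone_lowerCentralSeries R L M i.le_succ).lt_of_ne fun h => hne ?_
  rw [lowerCentralSeries_eq_of_succ_eq h hi,
    ← lowerCentralSeries_eq_of_succ_eq h (by omega : i ≤ n + 1), hbot]

end LowerCentralSeries

section Colon

variable {R L : Type*} [CommRing R] [LieRing L] [LieAlgebra R L]

def lieColon (P N : Submodule R L) : Submodule R L where
  carrier := {a | ∀ c ∈ N, ⁅a, c⁆ ∈ P}
  add_mem' ha hb c hc := by rw [add_lie]; exact P.add_mem (ha c hc) (hb c hc)
  zero_mem' c _ := by rw [zero_lie]; exact P.zero_mem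
  smul_mem' t a ha c hc := by rw [smul_lie]; exact P.smul_mem t (ha c hc)

@[simp]
lemma mem_lieColon {P N : Submodule R L} {a : L} : a ∈ lieColon P N ↔ ∀ c ∈ N, ⁅a, c⁆ ∈ P :=
  Iff.rfl

lemma lieColon_lowerCentralSeries_ne_top {i : ℕ}
    (h : lowerCentralSeries R L L (i + 2) < lowerCentralSeries R L L (i + 1)) :
    lieColon (lowerCentralSeries R L L (i + 2)).toSubmodule
      (lowerCentralSeries R L L i).toSubmodule ≠ ⊤ := by
  intro htop
  refine h.not_ge ?_
  rw [lowerCentralSeries_succ R L L i, LieSubmodule.lie_le_iff]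
  intro a _ c hc
  exact mem_lieColon.mp (htop ▸ Submodule.mem_top : a ∈ lieColon _ _) c hc

lemma mem_lieColon_of_sup_span_eq {i : ℕ} {a y : L}
    (hspan : (lowerCentralSeries R L L (i + 1)).toSubmodule ⊔ Submodule.span R {y} =
      (lowerCentralSeries R L L i).toSubmodule)
    (hay : ⁅a, y⁆ ∈ lowerCentralSeries R L L (i + 2)) :
    a ∈ lieColon (lowerCentralSeries R L L (i + 2)).toSubmodule
      (lowerCentralSeries R L L i).toSubmodule := by
  intro c hc
  rw [← hspan] at hc
  obtain ⟨z, hz, w, hw, rfl⟩ := Submodule.mem_sup.mp hc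
  obtain ⟨t, rfl⟩ := Submodule.mem_span_singleton.mp hw
  rw [lie_add, lie_smul]
  exact add_mem (lie_mem_lowerCentralSeries_succ a hz) (Submodule.smul_mem _ t hay)

end Colon

lemma lowerCentralSeries_one_le_two_of_sup_span_eq_top {R L : Type*} [CommRing R] [LieRing L]
    [LieAlgebra R L] {x : L}
    (h : (lowerCentralSeries R L L 1).toSubmodule ⊔ Submodule.span R {x} = ⊤) :
    lowerCentralSeries R L L 1 ≤ lowerCentralSeries R L L 2 := by
  have hspan : (lowerCentralSeries R L L (0 + 1)).toSubmodule ⊔ Submodule.span R {x} =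
      (lowerCentralSeries R L L 0).toSubmodule := by
    rw [lowerCentralSeries_zero, LieSubmodule.top_toSubmodule]
    exact h
  have hx : x ∈ lieColon (lowerCentralSeries R L L (0 + 2)).toSubmodule
      (lowerCentralSeries R L L 0).toSubmodule :=
    mem_lieColon_of_sup_span_eq hspan (by rw [lie_self]; exact zero_mem _)
  -- Skew-symmetry turns `hx` into `⁅a, x⁆ ∈ lowerCentralSeries 2` for every `a`.
  have htop : lieColon (lowerCentralSeries R L L (0 + 2)).toSubmodule
      (lowerCentralSeries R L L 0).toSubmodule = ⊤ :=
    eq_top_iff.mpr fun a _ => mem_lieColon_of_sup_span_eq hspan <| by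
      rw [← lie_skew]
      exact neg_mem (hx a (by simp))
  by_contra hle
  exact lieColon_lowerCentralSeries_ne_top
    ((antitone_lowerCentralSeries R L L one_le_two).lt_of_not_ge hle) htop

lemma Nat.apply_add_sub_le_apply_of_succ_lt {d : ℕ → ℕ} {i j : ℕ} (hij : i ≤ j)
    (h : ∀ m, i ≤ m → m < j → d (m + 1) < d m) : d j + (j - i) ≤ d i := by
  induction j, hij using Nat.le_induction with
  | base => simp
  | succ j hij ih =>
    have := ih fun m him hmj => h m him (by omega)
    have := h j hij (by omega)
    omega

theorem Submodule.sup_span_singleton_eq_of_finrank_le {K V : Type*} [DivisionRing K]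
    [AddCommGroup V] [Module K V] [Module.Finite K V] {p q : Submodule K V} (hpq : p ≤ q)
    (hq : Module.finrank K q ≤ Module.finrank K p + 1) {v : V} (hvq : v ∈ q) (hvp : v ∉ p) :
    p ⊔ Submodule.span K {v} = q :=
  Submodule.eq_of_le_of_finrank_le
    (sup_le hpq ((Submodule.span_singleton_le_iff_mem _ _).mpr hvq))
    (by rw [Submodule.finrank_sup_span_singleton hvp]; exact hq)

section FiniteDimensional

variable {k L : Type*} [Field k] [LieRing L] [LieAlgebra k L] [Module.Finite k L]

lemma finrank_lowerCentralSeries_one_add_two_le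
    (h₁ : lowerCentralSeries k L L 1 < lowerCentralSeries k L L 0)
    (h₂ : lowerCentralSeries k L L 2 < lowerCentralSeries k L L 1) :
    Module.finrank k (lowerCentralSeries k L L 1).toSubmodule + 2 ≤ Module.finrank k L := by
  obtain ⟨x, -, hx⟩ := SetLike.exists_of_lt h₁
  by_contra! hlt
  refine h₂.not_ge (lowerCentralSeries_one_le_two_of_sup_span_eq_top (x := x) ?_)
  refine Submodule.sup_span_singleton_eq_of_finrank_le le_top ?_ Submodule.mem_top hx
  rw [finrank_top]
  omega

end FiniteDimensional

/-- Maximal class in dimension `n + 2`; note that `lowerCentralSeries k L L i` is `gⁱ⁺¹`. -/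
structure LieAlgebra.IsMaximalClass (k L : Type*) [Field k] [LieRing L] [LieAlgebra k L]
    (n : ℕ) : Prop where
  finrank_eq : Module.finrank k L = n + 2
  lowerCentralSeries_eq_bot : lowerCentralSeries k L L (n + 1) = ⊥
  lowerCentralSeries_ne_bot : lowerCentralSeries k L L n ≠ ⊥

namespace LieAlgebra.IsMaximalClass

variable {k L : Type*} [Field k] [LieRing L] [LieAlgebra k L] {n : ℕ}

lemma lowerCentralSeries_succ_lt (h : IsMaximalClass k L n) {i : ℕ} (hi : i ≤ n) :
    lowerCentralSeries k L L (i + 1) < lowerCentralSeries k L L i :=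
  _root_.lowerCentralSeries_succ_lt h.lowerCentralSeries_eq_bot h.lowerCentralSeries_ne_bot hi

lemma finrank_lowerCentralSeries [Module.Finite k L] (h : IsMaximalClass k L n) {i : ℕ}
    (h₁ : 1 ≤ i) (hi : i ≤ n + 1) :
    Module.finrank k (lowerCentralSeries k L L i).toSubmodule = n + 1 - i := by
  set d : ℕ → ℕ := fun m => Module.finrank k (lowerCentralSeries k L L m).toSubmodule
  have hstep : ∀ m ≤ n, d (m + 1) < d m := fun m hm =>
    Submodule.finrank_lt_finrank_of_lt (h.lowerCentralSeries_succ_lt hm)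
  have hd : d (n + 1) = 0 := by
    change Module.finrank k (lowerCentralSeries k L L (n + 1)).toSubmodule = 0
    rw [h.lowerCentralSeries_eq_bot, LieSubmodule.bot_toSubmodule, finrank_bot]
  have hd₁ : d 1 ≤ n := by
    rcases Nat.eq_zero_or_pos n with rfl | hn
    · exact hd.le
    · have : d 1 + 2 ≤ n + 2 := h.finrank_eq ▸ finrank_lowerCentralSeries_one_add_two_le
        (h.lowerCentralSeries_succ_lt (Nat.zero_le n)) (h.lowerCentralSeries_succ_lt hn)
      omega
  have := Nat.apply_add_sub_le_apply_of_succ_lt h₁ fun m _ hm => hstep m (by omega)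
  have := Nat.apply_add_sub_le_apply_of_succ_lt hi fun m _ hm => hstep m (by omega)
  change d i = n + 1 - i
  omega

lemma sup_span_singleton_eq_lowerCentralSeries [Module.Finite k L] (h : IsMaximalClass k L n)
    {i : ℕ} (h₁ : 1 ≤ i) (hi : i ≤ n) {y : L} (hy : y ∈ lowerCentralSeries k L L i)
    (hy' : y ∉ lowerCentralSeries k L L (i + 1)) :
    (lowerCentralSeries k L L (i + 1)).toSubmodule ⊔ Submodule.span k {y} =
      (lowerCentralSeries k L L i).toSubmodule := by
  refine Submodule.sup_span_singleton_eq_of_finrank_le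
    (antitone_lowerCentralSeries k L L i.le_succ) ?_ hy hy'
  rw [h.finrank_lowerCentralSeries h₁ (by omega),
    h.finrank_lowerCentralSeries (by omega) (by omega)]
  omega

lemma exists_forall_notMem_lieColon [Infinite k] (h : IsMaximalClass k L n) :
    ∃ a : L, ∀ i < n, a ∉ lieColon (lowerCentralSeries k L L (i + 2)).toSubmodule
      (lowerCentralSeries k L L i).toSubmodule := by
  by_contra! hcover
  obtain ⟨i, hi⟩ := Subspace.exists_eq_top_of_iUnion_eq_univ (ι := Fin n)
    (p := fun i => lieColon (lowerCentralSeries k L L (i + 2)).toSubmodule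
      (lowerCentralSeries k L L i).toSubmodule) <| by
    refine Set.eq_univ_of_forall fun a => ?_
    obtain ⟨i, hi, ha⟩ := hcover a
    exact Set.mem_iUnion.mpr ⟨⟨i, hi⟩, ha⟩
  exact lieColon_lowerCentralSeries_ne_top (h.lowerCentralSeries_succ_lt i.isLt) hi

lemma iterate_toEnd_notMem_lowerCentralSeries [Module.Finite k L] (h : IsMaximalClass k L n)
    {a x : L} (ha : ∀ i < n, a ∉ lieColon (lowerCentralSeries k L L (i + 2)).toSubmodule
      (lowerCentralSeries k L L i).toSubmodule)
    (hx : ⁅a, x⁆ ∉ lowerCentralSeries k L L 2) {i : ℕ} (h₁ : 1 ≤ i) (hi : i ≤ n) :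
    (toEnd k L L a)^[i] x ∉ lowerCentralSeries k L L (i + 1) := by
  induction i, h₁ using Nat.le_induction with
  | base => simpa using hx
  | succ j hj ih =>
    have hspan := h.sup_span_singleton_eq_lowerCentralSeries hj (by omega)
      (iterate_toEnd_mem_lowerCentralSeries k L L a x j) (ih (by omega))
    intro hmem
    refine ha j (by omega) (mem_lieColon_of_sup_span_eq hspan ?_)
    rwa [Function.iterate_succ_apply', toEnd_apply_apply] at hmem

lemma lowerCentralSeries_one_le_span_iterate [Module.Finite k L] (h : IsMaximalClass k L n)
    {a x : L} (hgen : ∀ i, 1 ≤ i → i ≤ n →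
      (toEnd k L L a)^[i] x ∉ lowerCentralSeries k L L (i + 1)) :
    (lowerCentralSeries k L L 1).toSubmodule ≤
      Submodule.span k (Set.range fun j : Fin (n + 1) => (toEnd k L L a)^[j] x) := by
  suffices ∀ i, 1 ≤ i → i ≤ n + 1 → (lowerCentralSeries k L L i).toSubmodule ≤
      Submodule.span k (Set.range fun j : Fin (n + 1) => (toEnd k L L a)^[j] x) from
    this 1 le_rfl (by omega)
  intro i h₁ hi
  induction hi using Nat.decreasingInduction with
  | self =>
    rw [h.lowerCentralSeries_eq_bot, LieSubmodule.bot_toSubmodule]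
    exact bot_le
  | of_succ i hi ih =>
    rw [← h.sup_span_singleton_eq_lowerCentralSeries h₁ (by omega)
      (iterate_toEnd_mem_lowerCentralSeries k L L a x i) (hgen i h₁ (by omega))]
    refine sup_le (ih (by omega)) (Submodule.span_le.mpr ?_)
    exact Set.singleton_subset_iff.mpr (Submodule.subset_span ⟨⟨i, by omega⟩, rfl⟩)

lemma lowerCentralSeries_one_sup_span_sup_span_eq_top [Module.Finite k L]
    (h : IsMaximalClass k L n) {a x : L} (hx : ⁅a, x⁆ ∉ lowerCentralSeries k L L 2) :
    (lowerCentralSeries k L L 1).toSubmodule ⊔ Submodule.span k {x} ⊔ Submodule.span k {a} =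
      ⊤ := by
  have hx₁ : x ∉ lowerCentralSeries k L L 1 := fun hx₁ =>
    hx (lie_mem_lowerCentralSeries_succ a hx₁)
  have ha : a ∉ (lowerCentralSeries k L L 1).toSubmodule ⊔ Submodule.span k {x} := by
    intro ha
    obtain ⟨c, hc, w, hw, rfl⟩ := Submodule.mem_sup.mp ha
    obtain ⟨t, rfl⟩ := Submodule.mem_span_singleton.mp hw
    apply hx
    rw [add_lie, smul_lie, lie_self, smul_zero, add_zero, ← lie_skew]
    exact neg_mem (lie_mem_lowerCentralSeries_succ x hc)
  apply Submodule.eq_top_of_finrank_eq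
  rw [Submodule.finrank_sup_span_singleton ha, Submodule.finrank_sup_span_singleton hx₁,
    h.finrank_lowerCentralSeries le_rfl (by omega), h.finrank_eq]
  omega

lemma top_le_span_range_cons [Module.Finite k L] (h : IsMaximalClass k L n) {a x : L}
    (ha : ∀ i < n, a ∉ lieColon (lowerCentralSeries k L L (i + 2)).toSubmodule
      (lowerCentralSeries k L L i).toSubmodule)
    (hx : ⁅a, x⁆ ∉ lowerCentralSeries k L L 2) :
    ⊤ ≤ Submodule.span k
      (Set.range (Fin.cons a fun j : Fin (n + 1) => (toEnd k L L a)^[j] x)) := by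
  rw [← h.lowerCentralSeries_one_sup_span_sup_span_eq_top hx, Fin.range_cons,
    Submodule.span_insert, sup_comm]
  refine sup_le_sup_left (sup_le ?_ ?_) _
  · exact (h.lowerCentralSeries_one_le_span_iterate fun i h₁ hi =>
      h.iterate_toEnd_notMem_lowerCentralSeries ha hx h₁ hi)
  · exact Submodule.span_mono (Set.singleton_subset_iff.mpr ⟨0, by simp⟩)

end LieAlgebra.IsMaximalClass

/-- Let `g` be a finite-dimensional non-abelian Lie algebra of maximal class over a
field `k` of characteristic `0`, of dimension `n + 2` with `n ≥ 1` (maximal class: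
`g` is nilpotent of class `dim g − 1 = n + 1`).  Then there is a basis
`(x₁, x₂, y₁, …, y_n)` of `g` with `[x₁,x₂] = y₁`, `[x₁,yᵢ] = y_{i+1}` for
`1 ≤ i ≤ n−1`, and `[x₁,y_n] = 0`. -/
theorem maximal_class_lie_algebra_good_basis
    {k : Type*} [Field k] [CharZero k]
    {L : Type*} [LieRing L] [LieAlgebra k L]
    [Module.Finite k L]
    (n : ℕ) (hn : 1 ≤ n)
    (hdim : Module.finrank k L = n + 2)
    (hclass : lowerCentralSeries k L L (n + 1) = ⊥ ∧ lowerCentralSeries k L L n ≠ ⊥) :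
    ∃ b : Module.Basis (Fin (n + 2)) k L,
      ⁅b 0, b 1⁆ = b ⟨2, by omega⟩ ∧
      (∀ (i : ℕ) (h2 : 2 ≤ i) (h3 : i + 1 < n + 2),
        ⁅b 0, b ⟨i, by omega⟩⁆ = b ⟨i + 1, h3⟩) ∧
      ⁅b 0, b ⟨n + 1, by omega⟩⁆ = 0 := by
  have h : LieAlgebra.IsMaximalClass k L n := ⟨hdim, hclass.1, hclass.2⟩
  obtain ⟨a, ha⟩ := h.exists_forall_notMem_lieColon
  obtain ⟨x, -, hx⟩ :
      ∃ x ∈ lowerCentralSeries k L L 0, ⁅a, x⁆ ∉ lowerCentralSeries k L L 2 := by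
    simpa using ha 0 hn
  refine ⟨basisOfTopLeSpanOfCardEqFinrank _ (h.top_le_span_range_cons ha hx) (by simp [hdim]),
    ?_, fun i _ _ => ?_, ?_⟩
  all_goals simp only [coe_basisOfTopLeSpanOfCardEqFinrank, Fin.cons_zero]
  · show ⁅a, x⁆ = (toEnd k L L a)^[1] x
    simp
  · obtain ⟨m, rfl⟩ : ∃ m, i = m + 2 := ⟨i - 2, by omega⟩
    show ⁅a, (toEnd k L L a)^[m + 1] x⁆ = (toEnd k L L a)^[m + 2] x
    rw [Function.iterate_succ_apply' _ (m + 1), toEnd_apply_apply]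
  · show ⁅a, (toEnd k L L a)^[n] x⁆ = 0
    have := iterate_toEnd_mem_lowerCentralSeries k L L a x (n + 1)
    rwa [h.lowerCentralSeries_eq_bot, LieSubmodule.mem_bot, Function.iterate_succ_apply',
      toEnd_apply_apply] at this
end
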